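/- Let $\underline{n} = (n_1,\ldots,n_k)$ with $k \geq 2$, all $n_l \geq 1$, and $n = \sum n_l \geq 3$. Define $\mathrm{Cut}_{i,\underline{n}} = \{(j_l) \in \mathbb{N}^k : \sum_l j_l = i,\ 0 \le j_l \leq n_l\}$ and let $J_{\underline{n}}$ be the set of tuples $(\mu_l) \in \mathbb{N}^k$ such that there exist subsets $I_1,\ldots,I_{n-1}$ of $\{1,\ldots,n\}$ with $|I_i| = i$ and $\mu_l = \sum_i |I_i \cap B_l|$, where $B_l = \{\sum_{l'<l} n_{l'}+1, \ldots, \sum_{l'\leq l} n_{l'}\}$. Then the map $\prod_{i=1}^{n-1} \mathrm{Cut}_{i,\underline{n}} \to J_{\underline{n}}$, $(j_{i,l}) \mapsto (\sum_i j_{i,l})_l$, is a well-defined surjection which is not injective. In particular $|J_{\underline{n}}| < \prod_{i=1}^{n-1} |\mathrm{Cut}_{i,\underline{n}}|$. -/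
import Mathlib

open Finset


/-- `Cut_{i,n}`: tuples `(j_l)` of naturals with `∑ j_l = i` and `j_l ≤ n_l`. -/
def CutSet (K : ℕ) (n : Fin K → ℕ) (i : ℕ) : Set (Fin K → ℕ) :=
  {j | (∑ l, j l) = i ∧ ∀ l, j l ≤ n l}

/-- The number of elements of `I` lying in the `l`-th block
`B_l = {∑_{l'<l} n_{l'} + 1, …, ∑_{l'≤l} n_{l'}}` (written with `0`-indexed
residues). -/
def blockCard {N K : ℕ} (n : Fin K → ℕ) (I : Finset (Fin N)) (l : Fin K) : ℕ :=
  (I.filter fun x : Fin N =>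
      (∑ l' ∈ Finset.univ.filter (fun l' => l' < l), n l') ≤ (x : ℕ) ∧
        (x : ℕ) < ∑ l' ∈ Finset.univ.filter (fun l' => l' ≤ l), n l').card

namespace Stmt14Aux

variable {K N : ℕ}

def S (n : Fin K → ℕ) (l : Fin K) : ℕ := ∑ l' ∈ univ.filter (fun l' => l' < l), n l'
def T (n : Fin K → ℕ) (l : Fin K) : ℕ := ∑ l' ∈ univ.filter (fun l' => l' ≤ l), n l'

lemma blockCard_eq (n : Fin K → ℕ) (I : Finset (Fin N)) (l : Fin K) :
    blockCard n I l = (I.filter fun x : Fin N => S n l ≤ (x : ℕ) ∧ (x : ℕ) < T n l).card := rfl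

lemma T_eq (n : Fin K → ℕ) (l : Fin K) : T n l = n l + S n l := by
  unfold T S
  rw [show (univ.filter fun l' : Fin K => l' ≤ l) = insert l (univ.filter fun l' => l' < l) by
    ext l'
    simp only [mem_insert, mem_filter, mem_univ, true_and, Fin.le_def, Fin.lt_def, Fin.ext_iff]
    omega]
  rw [Finset.sum_insert (by simp)]

lemma T_le_S (n : Fin K → ℕ) {l₁ l₂ : Fin K} (h : l₁ < l₂) : T n l₁ ≤ S n l₂ := by
  apply Finset.sum_le_sum_of_subset
  intro l' hl'
  simp only [mem_filter, mem_univ, true_and] at *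
  exact lt_of_le_of_lt hl' h

lemma T_le (n : Fin K → ℕ) (l : Fin K) : T n l ≤ ∑ l', n l' :=
  Finset.sum_le_sum_of_subset (filter_subset _ _)

lemma card_filter_Ico (a b : ℕ) (hb : b ≤ N) :
    (univ.filter fun x : Fin N => a ≤ (x : ℕ) ∧ (x : ℕ) < b).card = b - a := by
  rw [← Nat.card_Ico a b]
  refine Finset.card_nbij (fun x => (x : ℕ)) ?_ ?_ ?_
  · intro x hx
    simp only [mem_coe, mem_filter, mem_univ, true_and] at hx
    simp [Finset.mem_Ico, hx.1, hx.2]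
  · intro x _ y _ h; exact Fin.val_injective h
  · intro m hm
    simp only [mem_coe, Finset.mem_Ico] at hm
    exact ⟨⟨m, lt_of_lt_of_le hm.2 hb⟩, by simp [hm.1, hm.2], rfl⟩

lemma existsUnique_block (hK : 0 < K) (n : Fin K → ℕ) (x : ℕ) (hx : x < ∑ l, n l) :
    ∃! l, S n l ≤ x ∧ x < T n l := by
  set F := univ.filter (fun l : Fin K => x < T n l) with hF
  have hne : F.Nonempty := by
    refine ⟨⟨K - 1, by omega⟩, ?_⟩
    have hTtop : T n ⟨K - 1, by omega⟩ = ∑ l', n l' := by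
      unfold T; congr 1; ext l'; simp [Fin.le_def]; omega
    simp only [hF, mem_filter, mem_univ, true_and]
    omega
  set l₀ := F.min' hne with hl₀
  have hl₀F : l₀ ∈ F := F.min'_mem hne
  have h1 : x < T n l₀ := by simpa [hF] using hl₀F
  have h2 : S n l₀ ≤ x := by
    by_contra h
    push_neg at h
    have hv : (l₀ : ℕ) ≠ 0 := by
      intro h0
      have hemp : (univ.filter fun l' : Fin K => l' < l₀) = ∅ := by
        ext l'; simp [Fin.lt_def, h0]
      have : S n l₀ = 0 := by unfold S; rw [hemp, Finset.sum_empty]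
      omega
    have hl₀pos : 0 < (l₀ : ℕ) := Nat.pos_of_ne_zero hv
    obtain ⟨p, hp⟩ : ∃ p : Fin K, (p : ℕ) = (l₀ : ℕ) - 1 :=
      ⟨⟨(l₀ : ℕ) - 1, by omega⟩, rfl⟩
    have hSp : S n l₀ = T n p := by
      unfold S T
      congr 1
      ext l'
      simp only [mem_filter, mem_univ, true_and, Fin.lt_def, Fin.le_def]
      omega
    have hpF : p ∈ F := by
      simp only [hF, mem_filter, mem_univ, true_and]; omega
    have hle := F.min'_le _ hpF
    have hplt : p < l₀ := by rw [Fin.lt_def]; omega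
    exact absurd hle (not_le.mpr hplt)
  refine ⟨l₀, ⟨h2, h1⟩, ?_⟩
  intro l ⟨ha, hb⟩
  by_contra hne'
  rcases lt_or_gt_of_ne hne' with h | h
  · have := T_le_S n h; omega
  · have := T_le_S n h; omega

lemma sum_blockCard (hK : 0 < K) (n : Fin K → ℕ) (hN : N = ∑ l, n l) (I : Finset (Fin N)) :
    ∑ l, blockCard n I l = I.card := by
  have key : ∀ x : Fin N, ∃! l, S n l ≤ (x : ℕ) ∧ (x : ℕ) < T n l :=
    fun x => existsUnique_block hK n x (hN ▸ x.isLt)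
  choose f hf1 hf2 using key
  rw [Finset.card_eq_sum_card_fiberwise (f := f) (t := univ) (fun x _ => mem_univ _)]
  apply Finset.sum_congr rfl
  intro l _
  rw [blockCard_eq]
  congr 1
  apply Finset.filter_congr
  intro x _
  constructor
  · intro hx; exact (hf2 x l hx).symm
  · intro hx; rw [← hx]; exact hf1 x

lemma blockCard_le (hK : 0 < K) (n : Fin K → ℕ) (hN : N = ∑ l, n l) (I : Finset (Fin N))
    (l : Fin K) : blockCard n I l ≤ n l := by
  rw [blockCard_eq]
  have h1 : (I.filter fun x : Fin N => S n l ≤ (x : ℕ) ∧ (x : ℕ) < T n l).card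
      ≤ (univ.filter fun x : Fin N => S n l ≤ (x : ℕ) ∧ (x : ℕ) < T n l).card :=
    card_le_card (filter_subset_filter _ (subset_univ I))
  have h2 := card_filter_Ico (N := N) (S n l) (T n l) (hN ▸ T_le n l)
  have h3 := T_eq n l
  omega

lemma blockCard_construct (hK : 0 < K) (n : Fin K → ℕ) (hN : N = ∑ l, n l)
    (j : Fin K → ℕ) (hj : ∀ l, j l ≤ n l) (l : Fin K) :
    blockCard n (univ.filter fun x : Fin N =>
      ∃ l', S n l' ≤ (x : ℕ) ∧ (x : ℕ) < S n l' + j l') l = j l := by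
  rw [blockCard_eq, Finset.filter_filter]
  have hsub : (univ.filter fun x : Fin N =>
        (∃ l', S n l' ≤ (x : ℕ) ∧ (x : ℕ) < S n l' + j l') ∧
          S n l ≤ (x : ℕ) ∧ (x : ℕ) < T n l)
      = univ.filter fun x : Fin N => S n l ≤ (x : ℕ) ∧ (x : ℕ) < S n l + j l := by
    apply Finset.filter_congr
    intro x _
    constructor
    · rintro ⟨⟨l', h1, h2⟩, h3, h4⟩
      obtain ⟨m, _, hmu⟩ := existsUnique_block hK n (x : ℕ) (hN ▸ x.isLt)
      have e1 := hmu l' ⟨h1, lt_of_lt_of_le h2 (by have := T_eq n l'; have := hj l'; omega)⟩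
      have e2 := hmu l ⟨h3, h4⟩
      have : l' = l := e1.trans e2.symm
      subst this
      exact ⟨h1, h2⟩
    · rintro ⟨h1, h2⟩
      have hT := T_eq n l
      have := hj l
      exact ⟨⟨l, h1, h2⟩, h1, by omega⟩
  rw [hsub, card_filter_Ico _ _ (by have := T_eq n l; have h2 := hN ▸ T_le n l; have := hj l; omega)]
  omega

end Stmt14Aux

namespace Stmt14Aux

def ev (K : ℕ) (m : Fin K) : Fin K → ℕ := fun l => if l = m then 1 else 0

lemma sum_ev (K : ℕ) (m : Fin K) : ∑ l, ev K m l = 1 := by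
  simp [ev, Finset.sum_ite_eq']

lemma ev_le {K : ℕ} (n : Fin K → ℕ) (hn : ∀ l, 1 ≤ n l) (m l : Fin K) : ev K m l ≤ n l := by
  unfold ev; split
  · exact hn l
  · omega

lemma ev_add_le {K : ℕ} (n : Fin K → ℕ) (hn : ∀ l, 1 ≤ n l) {m m' : Fin K}
    (h : m ≠ m' ∨ 2 ≤ n m) (l : Fin K) : ev K m l + ev K m' l ≤ n l := by
  unfold ev
  rcases eq_or_ne l m with rfl | h1
  · rcases eq_or_ne l m' with rfl | h2
    · rcases h with h | h
      · exact absurd rfl h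
      · rw [if_pos rfl]
        omega
    · simp only [if_pos rfl, if_neg h2]; exact hn l
  · rcases eq_or_ne l m' with rfl | h2
    · simp only [if_neg h1, if_pos rfl]; exact hn l
    · simp only [if_neg h1, if_neg h2]; omega

end Stmt14Aux

open Stmt14Aux

/-- `J_n`: tuples `(μ_l)` witnessed by subsets `I_1, …, I_{N-1}` of `{1,…,N}` with
`|I_i| = i` and `μ_l = ∑_i |I_i ∩ B_l|`. -/
def JSet (K : ℕ) (n : Fin K → ℕ) (N : ℕ) : Set (Fin K → ℕ) :=
  {μ | ∃ I : Fin (N - 1) → Finset (Fin N),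
    (∀ i, (I i).card = (i : ℕ) + 1) ∧ ∀ l, μ l = ∑ i, blockCard n (I i) l}

/-- for `k ≥ 2`, `n_l ≥ 1`, `N = ∑ n_l ≥ 3`, the map
`∏_i Cut_{i,n} → J_n`, `(j_{i,l}) ↦ (∑_i j_{i,l})_l` is a well-defined surjection which
is not injective; in particular `|J_n| < ∏_i |Cut_{i,n}|`. -/
theorem stmt_14 (K N : ℕ) (hK : 2 ≤ K) (n : Fin K → ℕ) (hn : ∀ l, 1 ≤ n l)
    (hN : N = ∑ l, n l) (hN3 : 3 ≤ N) :
    (∀ j : Fin (N - 1) → Fin K → ℕ,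
      (∀ i : Fin (N - 1), j i ∈ CutSet K n ((i : ℕ) + 1)) →
        (fun l => ∑ i, j i l) ∈ JSet K n N) ∧
    (∀ μ ∈ JSet K n N, ∃ j : Fin (N - 1) → Fin K → ℕ,
      (∀ i : Fin (N - 1), j i ∈ CutSet K n ((i : ℕ) + 1)) ∧ (fun l => ∑ i, j i l) = μ) ∧
    (∃ j j' : Fin (N - 1) → Fin K → ℕ,
      (∀ i : Fin (N - 1), j i ∈ CutSet K n ((i : ℕ) + 1)) ∧
      (∀ i : Fin (N - 1), j' i ∈ CutSet K n ((i : ℕ) + 1)) ∧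
      j ≠ j' ∧ (fun l => ∑ i, j i l) = (fun l => ∑ i, j' i l)) ∧
    Nat.card (JSet K n N) < ∏ i : Fin (N - 1), Nat.card (CutSet K n ((i : ℕ) + 1)) := by
  have hK0 : 0 < K := by omega
  -- Part 1: well-definedness
  have part1 : ∀ j : Fin (N - 1) → Fin K → ℕ,
      (∀ i : Fin (N - 1), j i ∈ CutSet K n ((i : ℕ) + 1)) →
        (fun l => ∑ i, j i l) ∈ JSet K n N := by
    intro j hj
    refine ⟨fun i => univ.filter fun x : Fin N =>
      ∃ l', S n l' ≤ (x : ℕ) ∧ (x : ℕ) < S n l' + j i l', fun i => ?_, fun l => ?_⟩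
    · rw [← sum_blockCard hK0 n hN,
        Finset.sum_congr rfl (fun l _ => blockCard_construct hK0 n hN (j i) (hj i).2 l)]
      exact (hj i).1
    · exact Finset.sum_congr rfl
        (fun i _ => (blockCard_construct hK0 n hN (j i) (hj i).2 l).symm)
  -- Part 2: surjectivity
  have part2 : ∀ μ ∈ JSet K n N, ∃ j : Fin (N - 1) → Fin K → ℕ,
      (∀ i : Fin (N - 1), j i ∈ CutSet K n ((i : ℕ) + 1)) ∧ (fun l => ∑ i, j i l) = μ := by
    intro μ hμ
    obtain ⟨I, hcard, hμl⟩ := hμ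
    refine ⟨fun i l => blockCard n (I i) l,
      fun i => ⟨?_, fun l => blockCard_le hK0 n hN (I i) l⟩, ?_⟩
    · rw [sum_blockCard hK0 n hN, hcard i]
    · funext l; exact (hμl l).symm
  -- Part 3: non-injectivity
  obtain ⟨c, hca, hcb⟩ : ∃ c : Fin K,
      (∀ l, ev K ⟨0, by omega⟩ l + ev K c l ≤ n l) ∧
      (∀ l, ev K ⟨1, by omega⟩ l + ev K c l ≤ n l) := by
    by_cases h0 : 2 ≤ n ⟨0, by omega⟩
    · exact ⟨⟨0, by omega⟩, fun l => ev_add_le n hn (Or.inr h0) l,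
        fun l => ev_add_le n hn (Or.inl (by simp [Fin.ext_iff])) l⟩
    · by_cases h1 : 2 ≤ n ⟨1, by omega⟩
      · exact ⟨⟨1, by omega⟩, fun l => ev_add_le n hn (Or.inl (by simp [Fin.ext_iff])) l,
          fun l => ev_add_le n hn (Or.inr h1) l⟩
      · have hK3 : 3 ≤ K := by
          by_contra hK3
          have hK2 : K = 2 := by omega
          subst hK2
          have hu : ∑ l : Fin 2, n l = n ⟨0, by omega⟩ + n ⟨1, by omega⟩ := by
            rw [Fin.sum_univ_two]; rfl
          omega
        exact ⟨⟨2, by omega⟩, fun l => ev_add_le n hn (Or.inl (by simp [Fin.ext_iff])) l,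
          fun l => ev_add_le n hn (Or.inl (by simp [Fin.ext_iff])) l⟩
  obtain ⟨i0, hi0⟩ : ∃ i : Fin (N - 1), (i : ℕ) = 0 := ⟨⟨0, by omega⟩, rfl⟩
  obtain ⟨i1, hi1⟩ : ∃ i : Fin (N - 1), (i : ℕ) = 1 := ⟨⟨1, by omega⟩, rfl⟩
  have hi01 : i0 ≠ i1 := by intro h; rw [h, hi1] at hi0; omega
  have hjc : ∀ i : Fin (N - 1),
      (fun l => blockCard n (univ.filter fun x : Fin N =>
        0 ≤ (x : ℕ) ∧ (x : ℕ) < (i : ℕ) + 1) l) ∈ CutSet K n ((i : ℕ) + 1) := by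
    intro i
    constructor
    · rw [sum_blockCard hK0 n hN, card_filter_Ico 0 ((i : ℕ) + 1) (by have := i.isLt; omega)]
      omega
    · exact fun l => blockCard_le hK0 n hN _ l
  have part3 : ∃ j j' : Fin (N - 1) → Fin K → ℕ,
      (∀ i : Fin (N - 1), j i ∈ CutSet K n ((i : ℕ) + 1)) ∧
      (∀ i : Fin (N - 1), j' i ∈ CutSet K n ((i : ℕ) + 1)) ∧
      j ≠ j' ∧ (fun l => ∑ i, j i l) = (fun l => ∑ i, j' i l) := by
    refine ⟨fun i => if i = i0 then ev K ⟨0, by omega⟩ else if i = i1 then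
        (fun l => ev K ⟨1, by omega⟩ l + ev K c l) else
        (fun l => blockCard n (univ.filter fun x : Fin N =>
          0 ≤ (x : ℕ) ∧ (x : ℕ) < (i : ℕ) + 1) l),
      fun i => if i = i0 then ev K ⟨1, by omega⟩ else if i = i1 then
        (fun l => ev K ⟨0, by omega⟩ l + ev K c l) else
        (fun l => blockCard n (univ.filter fun x : Fin N =>
          0 ≤ (x : ℕ) ∧ (x : ℕ) < (i : ℕ) + 1) l), ?_, ?_, ?_, ?_⟩
    · intro i
      beta_reduce
      by_cases h : i = i0
      · subst h
        rw [if_pos rfl]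
        exact ⟨by rw [sum_ev, hi0], fun l => ev_le n hn _ l⟩
      · by_cases h' : i = i1
        · subst h'
          rw [if_neg h, if_pos rfl]
          refine ⟨?_, hcb⟩
          rw [Finset.sum_add_distrib, sum_ev, sum_ev, hi1]
        · rw [if_neg h, if_neg h']
          exact hjc i
    · intro i
      beta_reduce
      by_cases h : i = i0
      · subst h
        rw [if_pos rfl]
        exact ⟨by rw [sum_ev, hi0], fun l => ev_le n hn _ l⟩
      · by_cases h' : i = i1
        · subst h'
          rw [if_neg h, if_pos rfl]
          refine ⟨?_, hca⟩
          rw [Finset.sum_add_distrib, sum_ev, sum_ev, hi1]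
        · rw [if_neg h, if_neg h']
          exact hjc i
    · intro h
      have h2 := congrFun (congrFun h i0) ⟨0, by omega⟩
      simp only [if_pos rfl] at h2
      have : (1 : ℕ) = 0 := by
        simpa [ev, show (⟨0, by omega⟩ : Fin K) ≠ ⟨1, by omega⟩ by simp [Fin.ext_iff]] using h2
      omega
    · funext l
      have hsum : ∀ g : Fin (N - 1) → ℕ,
          ∑ i, g i = g i0 + (g i1 + ∑ i ∈ (univ.erase i0).erase i1, g i) := by
        intro g
        rw [← Finset.add_sum_erase _ g (mem_univ i0),
          ← Finset.add_sum_erase _ g (Finset.mem_erase.mpr ⟨Ne.symm hi01, mem_univ i1⟩)]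
      rw [hsum, hsum]
      beta_reduce
      have hRR : (∑ i ∈ (univ.erase i0).erase i1,
            (if i = i0 then ev K ⟨0, by omega⟩ else if i = i1 then
              (fun l => ev K ⟨1, by omega⟩ l + ev K c l) else
              (fun l => blockCard n (univ.filter fun x : Fin N =>
                0 ≤ (x : ℕ) ∧ (x : ℕ) < (i : ℕ) + 1) l)) l)
          = ∑ i ∈ (univ.erase i0).erase i1,
            (if i = i0 then ev K ⟨1, by omega⟩ else if i = i1 then
              (fun l => ev K ⟨0, by omega⟩ l + ev K c l) else
              (fun l => blockCard n (univ.filter fun x : Fin N =>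
                0 ≤ (x : ℕ) ∧ (x : ℕ) < (i : ℕ) + 1) l)) l := by
        apply Finset.sum_congr rfl
        intro i hi
        have h1 : i ≠ i1 := (Finset.mem_erase.mp hi).1
        have h2 : i ≠ i0 := (Finset.mem_erase.mp (Finset.mem_erase.mp hi).2).1
        rw [if_neg h2, if_neg h1, if_neg h2, if_neg h1]
      rw [if_pos (rfl : i0 = i0), if_pos (rfl : i0 = i0),
        if_neg (Ne.symm hi01), if_neg (Ne.symm hi01),
        if_pos (rfl : i1 = i1), if_pos (rfl : i1 = i1), hRR]
      omega
  refine ⟨part1, part2, part3, ?_⟩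
  -- Part 4: cardinality
  have hfinCut : ∀ m : ℕ, (CutSet K n m).Finite := by
    intro m
    apply Set.Finite.subset (Set.Finite.pi (fun l : Fin K => Set.finite_Iic (n l)))
    intro x hx
    rw [Set.mem_pi]
    intro l _
    exact hx.2 l
  have hfinJ : (JSet K n N).Finite := by
    apply Set.Finite.subset (Set.Finite.pi (fun l : Fin K => Set.finite_Iic ((N - 1) * n l)))
    intro μ hμ
    obtain ⟨I, hcard, hμl⟩ := hμ
    rw [Set.mem_pi]
    intro l _
    have h1 : μ l ≤ ∑ _i : Fin (N - 1), n l := by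
      rw [hμl l]
      exact Finset.sum_le_sum fun i _ => blockCard_le hK0 n hN (I i) l
    rw [Set.mem_Iic]
    calc μ l ≤ ∑ _i : Fin (N - 1), n l := h1
      _ = (N - 1) * n l := by rw [Finset.sum_const, Finset.card_univ, Fintype.card_fin, smul_eq_mul]
  haveI : Fintype ↥(JSet K n N) := hfinJ.fintype
  haveI : ∀ i : Fin (N - 1), Fintype ↥(CutSet K n ((i : ℕ) + 1)) := fun _ => (hfinCut _).fintype
  set F : (∀ i : Fin (N - 1), ↥(CutSet K n ((i : ℕ) + 1))) → ↥(JSet K n N) :=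
    fun f => ⟨fun l => ∑ i, (f i : Fin K → ℕ) l,
      part1 (fun i => (f i : Fin K → ℕ)) (fun i => (f i).2)⟩ with hF
  have hFsurj : Function.Surjective F := by
    rintro ⟨μ, hμ⟩
    obtain ⟨j, hj, hjeq⟩ := part2 μ hμ
    exact ⟨fun i => ⟨j i, hj i⟩, Subtype.ext hjeq⟩
  have hFninj : ¬ Function.Injective F := by
    intro hinj
    obtain ⟨j, j', hj, hj', hne, heq⟩ := part3
    apply hne
    have h := hinj (a₁ := fun i => ⟨j i, hj i⟩) (a₂ := fun i => ⟨j' i, hj' i⟩)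
      (Subtype.ext heq)
    funext i l
    exact congrFun (congrArg Subtype.val (congrFun h i)) l
  have hlt := Fintype.card_lt_of_surjective_not_injective F hFsurj hFninj
  calc Nat.card ↥(JSet K n N) = Fintype.card ↥(JSet K n N) := Nat.card_eq_fintype_card
    _ < Fintype.card (∀ i : Fin (N - 1), ↥(CutSet K n ((i : ℕ) + 1))) := hlt
    _ = Nat.card (∀ i : Fin (N - 1), ↥(CutSet K n ((i : ℕ) + 1))) := Nat.card_eq_fintype_card.symm
    _ = ∏ i : Fin (N - 1), Nat.card ↥(CutSet K n ((i : ℕ) + 1)) := Nat.card_pi
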